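/- Let X be a Banach lattice and C ⊆ X. Then (1) the solid convex hull satisfies sch(C) = ch(so(C)) = sch(|C|), and consequently csch(C) = csch(|C|); and (2) if moreover C ⊆ X₊ (all elements of C are positive), then sch(C) = so(ch(C)). -/

import Mathlib

/-!
The convex hull of a solid set is solid: if `|x| ≤ |a • z₁ + b • z₂| ≤ a • |z₁| + b • |z₂|`,
the Riesz decomposition property writes `x = a • w₁ + b • w₂` with `|wᵢ| ≤ |zᵢ|`. Hence
`ch (so C)` is the smallest convex solid set containing `C`, and `so C = so |C|` gives the
rest of (1). If `C ≥ 0`, then `ch C ≥ 0` and `|a • z₁ + b • z₂| ≤ a • y₁ + b • y₂` whenever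
`|zᵢ| ≤ yᵢ`, so `so (ch C)` is already convex.
-/

open Set Metric

variable {X : Type*} [NormedAddCommGroup X] [Lattice X] [HasSolidNorm X] [IsOrderedAddMonoid X]
  [NormedSpace ℝ X] [PosSMulStrictMono ℝ X]
  [CompleteSpace X]

/-- A set is solid if `|x| ≤ |z|` with `z ∈ A` implies `x ∈ A`. -/
def IsSolidSet (A : Set X) : Prop := ∀ ⦃x z : X⦄, z ∈ A → |x| ≤ |z| → x ∈ A

/-- A subset of the positive cone is positive-solid if `0 ≤ x ≤ z` with `z ∈ A`
implies `x ∈ A`. -/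
def IsPosSolidSet (A : Set X) : Prop := ∀ ⦃x z : X⦄, 0 ≤ x → z ∈ A → x ≤ z → x ∈ A

/-- The solid hull of a set: the smallest solid set containing it. -/
def solidHull (C : Set X) : Set X := {z : X | ∃ x ∈ C, |z| ≤ |x|}

/-- The solid convex hull: the smallest convex solid set containing `C`. -/
def solidConvexHull (C : Set X) : Set X :=
  ⋂₀ {D : Set X | C ⊆ D ∧ Convex ℝ D ∧ IsSolidSet D}

/-- The set of order extreme points of `A`. -/
def orderExtremePoints (A : Set X) : Set X :=
  {a | a ∈ A ∧ ∀ x₀ ∈ A, ∀ x₁ ∈ A, ∀ t : ℝ, 0 < t → t < 1 →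
    a ≤ (1 - t) • x₀ + t • x₁ → x₀ = a ∧ x₁ = a}

section VectorLattice

variable {𝕜 E : Type*} [Lattice E] [AddCommGroup E]

theorem abs_smul_le_smul_abs [Ring 𝕜] [PartialOrder 𝕜] [Module 𝕜 E] [PosSMulMono 𝕜 E] {t : 𝕜}
    (ht : 0 ≤ t) (z : E) : |t • z| ≤ t • |z| := by
  refine abs_le'.mpr ⟨smul_le_smul_of_nonneg_left (le_abs_self z) ht, ?_⟩
  rw [← smul_neg]
  exact smul_le_smul_of_nonneg_left (neg_le_abs z) ht

variable [IsOrderedAddMonoid E]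

-- `x₁` is `x` truncated to the order interval `[-a, a]`.
theorem exists_add_eq_of_abs_le_add {a b x : E} (ha : 0 ≤ a) (hb : 0 ≤ b) (h : |x| ≤ a + b) :
    ∃ x₁ x₂ : E, x = x₁ + x₂ ∧ |x₁| ≤ a ∧ |x₂| ≤ b := by
  have hxa : x ≤ a + b := (le_abs_self x).trans h
  have hxb : -(a + b) ≤ x := neg_le.mp ((neg_le_abs x).trans h)
  refine ⟨(x ⊓ a) ⊔ (-a), x - ((x ⊓ a) ⊔ (-a)), by abel, ?_, ?_⟩
  · exact abs_le'.mpr ⟨sup_le inf_le_right (neg_le.mp (neg_le_self ha)), neg_le.mp le_sup_right⟩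
  · refine abs_le'.mpr ⟨?_, ?_⟩
    · exact sub_le_comm.mp
        (le_sup_of_le_left (le_inf (sub_le_self x hb) (sub_le_iff_le_add.mpr hxa)))
    · rw [neg_sub, sub_le_iff_le_add]
      refine sup_le (inf_le_left.trans (le_add_of_nonneg_left hb)) ?_
      rwa [← sub_le_iff_le_add', sub_eq_add_neg, ← neg_add]

section OrderedRing

variable [Ring 𝕜] [PartialOrder 𝕜] [Module 𝕜 E] [PosSMulMono 𝕜 E]

theorem abs_add_smul_le {a b : 𝕜} (ha : 0 ≤ a) (hb : 0 ≤ b) (z₁ z₂ : E) :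
    |a • z₁ + b • z₂| ≤ a • |z₁| + b • |z₂| :=
  (abs_add_le _ _).trans (add_le_add (abs_smul_le_smul_abs ha z₁) (abs_smul_le_smul_abs hb z₂))

end OrderedRing

section OrderedField

variable [Field 𝕜] [LinearOrder 𝕜] [IsStrictOrderedRing 𝕜] [Module 𝕜 E] [PosSMulMono 𝕜 E]

theorem exists_smul_eq_of_abs_le_smul_abs {t : 𝕜} (ht : 0 ≤ t) {x z : E} (h : |x| ≤ t • |z|) :
    ∃ w : E, |w| ≤ |z| ∧ x = t • w := by
  rcases ht.eq_or_lt with rfl | ht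
  · rw [zero_smul] at h
    refine ⟨0, by simp, ?_⟩
    rw [smul_zero]
    exact le_antisymm ((le_abs_self x).trans h) (neg_nonpos.mp ((neg_le_abs x).trans h))
  refine ⟨t⁻¹ • x, ?_, (smul_inv_smul₀ ht.ne' x).symm⟩
  calc |t⁻¹ • x| ≤ t⁻¹ • |x| := abs_smul_le_smul_abs (inv_nonneg.mpr ht.le) x
    _ ≤ t⁻¹ • (t • |z|) := smul_le_smul_of_nonneg_left h (inv_nonneg.mpr ht.le)
    _ = |z| := inv_smul_smul₀ ht.ne' _

theorem Convex.setOf_forall_abs_le_mem {D : Set E} (hD : Convex 𝕜 D) :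
    Convex 𝕜 {z : E | ∀ x : E, |x| ≤ |z| → x ∈ D} := by
  intro z₁ hz₁ z₂ hz₂ a b ha hb hab x hx
  obtain ⟨x₁, x₂, rfl, hx₁, hx₂⟩ := exists_add_eq_of_abs_le_add
    (smul_nonneg ha (abs_nonneg z₁)) (smul_nonneg hb (abs_nonneg z₂))
    (hx.trans (abs_add_smul_le ha hb z₁ z₂))
  obtain ⟨w₁, hw₁, rfl⟩ := exists_smul_eq_of_abs_le_smul_abs ha hx₁
  obtain ⟨w₂, hw₂, rfl⟩ := exists_smul_eq_of_abs_le_smul_abs hb hx₂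
  exact hD (hz₁ w₁ hw₁) (hz₂ w₂ hw₂) ha hb hab

end OrderedField

end VectorLattice

section SolidSets

variable {E : Type*} [NormedAddCommGroup E] [Lattice E]

theorem subset_solidHull (C : Set E) : C ⊆ solidHull C := fun x hx => ⟨x, hx, le_rfl⟩

theorem isSolidSet_solidHull (C : Set E) : IsSolidSet (solidHull C) := by
  rintro x z ⟨c, hc, hzc⟩ hxz
  exact ⟨c, hc, hxz.trans hzc⟩

theorem solidHull_subset {C D : Set E} (hCD : C ⊆ D) (hD : IsSolidSet D) : solidHull C ⊆ D := by
  rintro z ⟨c, hc, hzc⟩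
  exact hD (hCD hc) hzc

section NormedSpace

variable [NormedSpace ℝ E]

theorem subset_solidConvexHull (C : Set E) : C ⊆ solidConvexHull C :=
  fun _ hx => mem_sInter.mpr fun _ hD => hD.1 hx

theorem convex_solidConvexHull (C : Set E) : Convex ℝ (solidConvexHull C) :=
  convex_sInter fun _ hD => hD.2.1

theorem isSolidSet_solidConvexHull (C : Set E) : IsSolidSet (solidConvexHull C) :=
  fun _ _ hz hxz => mem_sInter.mpr fun D hD => hD.2.2 (mem_sInter.mp hz D hD) hxz

theorem solidConvexHull_subset {C D : Set E} (hCD : C ⊆ D) (hconv : Convex ℝ D)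
    (hsolid : IsSolidSet D) : solidConvexHull C ⊆ D :=
  sInter_subset_of_mem ⟨hCD, hconv, hsolid⟩

end NormedSpace

section OrderedAddMonoid

variable [IsOrderedAddMonoid E]

theorem solidHull_abs_image (C : Set E) : solidHull (abs '' C) = solidHull C := by
  ext z
  constructor
  · rintro ⟨_, ⟨c, hc, rfl⟩, h⟩
    exact ⟨c, hc, by rwa [abs_abs] at h⟩
  · rintro ⟨c, hc, h⟩
    exact ⟨|c|, mem_image_of_mem _ hc, by rwa [abs_abs]⟩

variable [NormedSpace ℝ E] [PosSMulMono ℝ E]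

theorem isSolidSet_convexHull {A : Set E} (hA : IsSolidSet A) :
    IsSolidSet (convexHull ℝ A) := by
  have hcore : convexHull ℝ A ⊆ {z | ∀ x, |x| ≤ |z| → x ∈ convexHull ℝ A} :=
    convexHull_min (fun _ hz _ hx => subset_convexHull ℝ A (hA hz hx))
      (convex_convexHull ℝ A).setOf_forall_abs_le_mem
  exact fun x _ hz hxz => hcore hz x hxz

theorem Convex.solidHull_of_nonneg {D : Set E} (hD : Convex ℝ D) (hpos : ∀ y ∈ D, 0 ≤ y) :
    Convex ℝ (solidHull D) := by
  rintro z₁ ⟨y₁, hy₁, h₁⟩ z₂ ⟨y₂, hy₂, h₂⟩ a b ha hb hab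
  have hy : a • y₁ + b • y₂ ∈ D := hD hy₁ hy₂ ha hb hab
  refine ⟨a • y₁ + b • y₂, hy, ?_⟩
  rw [abs_of_nonneg (hpos _ hy)]
  rw [abs_of_nonneg (hpos _ hy₁)] at h₁
  rw [abs_of_nonneg (hpos _ hy₂)] at h₂
  calc |a • z₁ + b • z₂| ≤ a • |z₁| + b • |z₂| := abs_add_smul_le ha hb z₁ z₂
    _ ≤ a • y₁ + b • y₂ := by gcongr

theorem solidConvexHull_eq_convexHull_solidHull (C : Set E) :
    solidConvexHull C = convexHull ℝ (solidHull C) :=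
  (solidConvexHull_subset ((subset_solidHull C).trans (subset_convexHull ℝ _))
      (convex_convexHull ℝ _) (isSolidSet_convexHull (isSolidSet_solidHull C))).antisymm
    (convexHull_min (solidHull_subset (subset_solidConvexHull C) (isSolidSet_solidConvexHull C))
      (convex_solidConvexHull C))

theorem solidConvexHull_abs_image (C : Set E) :
    solidConvexHull (abs '' C) = solidConvexHull C := by
  rw [solidConvexHull_eq_convexHull_solidHull, solidConvexHull_eq_convexHull_solidHull,
    solidHull_abs_image]

theorem solidConvexHull_eq_solidHull_convexHull_of_nonneg {C : Set E}
    (hC : C ⊆ {x : E | 0 ≤ x}) : solidConvexHull C = solidHull (convexHull ℝ C) := by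
  have hpos : ∀ y ∈ convexHull ℝ C, 0 ≤ y := fun _ hy => convexHull_min hC (convex_Ici 0) hy
  refine (solidConvexHull_subset ((subset_convexHull ℝ C).trans (subset_solidHull _))
    ((convex_convexHull ℝ C).solidHull_of_nonneg hpos) (isSolidSet_solidHull _)).antisymm ?_
  exact solidHull_subset (convexHull_min (subset_solidConvexHull C) (convex_solidConvexHull C))
    (isSolidSet_solidConvexHull C)

end OrderedAddMonoid

end SolidSets

theorem statement2 (C : Set X) :
    solidConvexHull C = convexHull ℝ (solidHull C) ∧
    solidConvexHull C = solidConvexHull (abs '' C) ∧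
    closure (solidConvexHull C) = closure (solidConvexHull (abs '' C)) ∧
    (C ⊆ {x : X | 0 ≤ x} → solidConvexHull C = solidHull (convexHull ℝ C)) := by
  have habs : solidConvexHull C = solidConvexHull (abs '' C) :=
    (solidConvexHull_abs_image C).symm
  exact ⟨solidConvexHull_eq_convexHull_solidHull C, habs, by rw [habs],
    solidConvexHull_eq_solidHull_convexHull_of_nonneg⟩
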